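/- For all integers m, n ≥ 1 and all indices i, j ∈ {0,…,m−1} with j = i + n, the (i,j) entry of X_n equals 1; moreover each diagonal entry satisfies (X_n) i i = ∏_{u=1}^{n} (9^i − 9^{u−1}). -/

import Mathlib

/-!
`B - 9^u • 1` is upper bidiagonal with superdiagonal `1`. Products of upper triangular matrices
supported on the first `k` and `l` superdiagonals are supported on the first `k + l`; their
diagonal entries multiply, and so do their entries on the outermost superdiagonal. Hence `X_n` is
supported on the first `n` superdiagonals, with `1` on the `n`-th and `∏ (9^i - 9^u)` on the
diagonal.
-/

/-- The m×m matrix B over ℤ₂ with B i i = 9^i, B i (i+1) = 1 and all other entries 0. -/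
noncomputable def Bmat (m : ℕ) : Matrix (Fin m) (Fin m) ℤ_[2] := fun i j =>
  if (j : ℕ) = i then 9 ^ (i : ℕ) else if (j : ℕ) = (i : ℕ) + 1 then 1 else 0

/-- X n = (B - 9⁰·1)(B - 9¹·1)⋯(B - 9^{n-1}·1). -/
noncomputable def Xmat (m n : ℕ) : Matrix (Fin m) (Fin m) ℤ_[2] :=
  ((List.range n).map (fun u => Bmat m - (9 : ℤ_[2]) ^ u • (1 : Matrix (Fin m) (Fin m) ℤ_[2]))).prod

def Matrix.IsUpperBand {m : ℕ} {R : Type*} [Zero R] (M : Matrix (Fin m) (Fin m) R) (k : ℕ) :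
    Prop :=
  ∀ i j : Fin m, (j : ℕ) < i ∨ (i : ℕ) + k < j → M i j = 0

namespace Matrix.IsUpperBand

variable {m k l : ℕ} {R : Type*} [NonUnitalNonAssocSemiring R] {M N : Matrix (Fin m) (Fin m) R}

theorem mul (hM : M.IsUpperBand k) (hN : N.IsUpperBand l) : (M * N).IsUpperBand (k + l) := by
  intro i j hij
  rw [Matrix.mul_apply]
  refine Finset.sum_eq_zero fun p _ => ?_
  by_cases hp : (p : ℕ) < i ∨ (i : ℕ) + k < p
  · rw [hM i p hp, zero_mul]
  · rw [hN p j (by omega), mul_zero]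

theorem mul_apply_self (hM : M.IsUpperBand k) (hN : N.IsUpperBand l) (i : Fin m) :
    (M * N) i i = M i i * N i i := by
  rw [Matrix.mul_apply]
  refine Finset.sum_eq_single i (fun p _ hpi => ?_) (by simp)
  rcases lt_or_gt_of_ne (Fin.val_ne_of_ne hpi) with hp | hp
  · rw [hM i p (Or.inl hp), zero_mul]
  · rw [hN p i (Or.inl hp), mul_zero]

theorem mul_apply_of_eq_add (hM : M.IsUpperBand k) (hN : N.IsUpperBand l) {i p j : Fin m}
    (hp : (p : ℕ) = i + k) (hj : (j : ℕ) = p + l) : (M * N) i j = M i p * N p j := by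
  rw [Matrix.mul_apply]
  refine Finset.sum_eq_single p (fun q _ hqp => ?_) (by simp)
  rcases lt_or_gt_of_ne (Fin.val_ne_of_ne hqp) with hq | hq
  · rw [hN q j (Or.inr (by omega)), mul_zero]
  · rw [hM i q (Or.inr (by omega)), zero_mul]

end Matrix.IsUpperBand

section

variable {m : ℕ} (c : ℤ_[2])

theorem Bmat_sub_smul_one_isUpperBand : (Bmat m - c • 1).IsUpperBand 1 := by
  intro i j hij
  have hne : i ≠ j := fun h => by subst h; omega
  simp only [Matrix.sub_apply, Matrix.smul_apply, Matrix.one_apply_ne hne, Bmat]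
  split_ifs <;> first | omega | simp

theorem Bmat_sub_smul_one_apply_self (i : Fin m) : (Bmat m - c • 1) i i = 9 ^ (i : ℕ) - c := by
  simp [Bmat]

theorem Bmat_sub_smul_one_apply_of_eq_succ {i j : Fin m} (hj : (j : ℕ) = i + 1) :
    (Bmat m - c • 1) i j = 1 := by
  have hne : i ≠ j := fun h => by subst h; omega
  simp [Bmat, hj, Matrix.one_apply_ne hne]

end

section

variable {m : ℕ}

theorem Xmat_zero : Xmat m 0 = 1 := rfl

theorem Xmat_succ (n : ℕ) : Xmat m (n + 1) = Xmat m n * (Bmat m - (9 : ℤ_[2]) ^ n • 1) := by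
  simp [Xmat, List.range_succ]

theorem Xmat_isUpperBand (n : ℕ) : (Xmat m n).IsUpperBand n := by
  induction n with
  | zero =>
    intro i j hij
    rw [Xmat_zero, Matrix.one_apply_ne fun h => by subst h; omega]
  | succ n ih =>
    rw [Xmat_succ]
    exact ih.mul (Bmat_sub_smul_one_isUpperBand _)

theorem Xmat_apply_self (n : ℕ) (i : Fin m) :
    Xmat m n i i = ∏ u ∈ Finset.Icc 1 n, ((9 : ℤ_[2]) ^ (i : ℕ) - 9 ^ (u - 1)) := by
  induction n with
  | zero => simp [Xmat_zero]
  | succ n ih =>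
    rw [Xmat_succ, (Xmat_isUpperBand n).mul_apply_self (Bmat_sub_smul_one_isUpperBand _), ih,
      Bmat_sub_smul_one_apply_self, Finset.prod_Icc_succ_top (by omega), Nat.add_sub_cancel]

theorem Xmat_apply_of_eq_add (n : ℕ) {i j : Fin m} (hj : (j : ℕ) = i + n) : Xmat m n i j = 1 := by
  induction n generalizing j with
  | zero => simp [Xmat_zero, Fin.ext hj]
  | succ n ih =>
    let p : Fin m := ⟨i + n, by omega⟩
    rw [Xmat_succ, (Xmat_isUpperBand n).mul_apply_of_eq_add (Bmat_sub_smul_one_isUpperBand _)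
      (p := p) rfl (by simp only [p]; omega), ih rfl,
      Bmat_sub_smul_one_apply_of_eq_succ _ (by simp only [p]; omega), one_mul]

end

theorem Xmat_top_band_and_diag_general (m n : ℕ) :
    (∀ i j : Fin m, (j : ℕ) = (i : ℕ) + n → Xmat m n i j = 1) ∧
    (∀ i : Fin m, Xmat m n i i =
      ∏ u ∈ Finset.Icc 1 n, ((9 : ℤ_[2]) ^ (i : ℕ) - 9 ^ (u - 1))) :=
  ⟨fun _ _ => Xmat_apply_of_eq_add n, Xmat_apply_self n⟩

theorem Xmat_top_band_and_diag (m n : ℕ) (hm : 1 ≤ m) (hn : 1 ≤ n) :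
    (∀ i j : Fin m, (j : ℕ) = (i : ℕ) + n → Xmat m n i j = 1) ∧
    (∀ i : Fin m, Xmat m n i i =
      ∏ u ∈ Finset.Icc 1 n, ((9 : ℤ_[2]) ^ (i : ℕ) - 9 ^ (u - 1))) :=
  Xmat_top_band_and_diag_general m n
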